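/- Let F : ℝ^p → ℝ be twice continuously differentiable with ∇²F L-Lipschitz (‖∇²F(x) − ∇²F(y)‖ ≤ L‖x−y‖ for all x, y). Let γ > 0, 0 < ε < 1, and 0 < β < 1/2 with 1 − 2ε − 2(1−ε)β > 0. Let x ∈ ℝ^p and H a symmetric matrix with (1−ε)γ·I ⪯ H and ‖H − ∇²F(x)‖ ≤ εγ, and set p = −H⁻¹∇F(x). If ‖∇F(x)‖ ≤ 3(1−ε)γ²(1 − 2ε − 2(1−ε)β)/L, then F(x + p) ≤ F(x) + β pᵀ∇F(x); i.e., the unit step size α = 1 satisfies the Armijo condition. -/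

import Mathlib

/-! Along the segment `t ↦ x + t • p`, a Lipschitz Hessian gives the cubic upper bound
`F (x + p) ≤ F x + ⟪∇F x, p⟫ + ⟪∇²F x p, p⟫ / 2 + L ‖p‖³ / 6`. Replacing `∇²F x` by `H` costs
`εγ ‖p‖²`, while `⟪H p, p⟫ = -⟪p, ∇F x⟫ ≥ (1 - ε)γ ‖p‖²`. The same coercivity gives
`(1 - ε)γ ‖p‖ ≤ ‖∇F x‖`, so the gradient condition becomes `L ‖p‖ ≤ 3γ (1 - 2ε - 2(1 - ε)β)`,
which is exactly what the cubic term may cost for the bound to stay below `F x + β ⟪p, ∇F x⟫`. -/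

open scoped RealInnerProductSpace

/-- The Hessian of `F : ℝ^d → ℝ` at `x`, as a continuous linear map,
obtained as the (Fréchet) derivative of the gradient. -/
noncomputable def hess {d : ℕ} (F : EuclideanSpace ℝ (Fin d) → ℝ)
    (x : EuclideanSpace ℝ (Fin d)) :
    EuclideanSpace ℝ (Fin d) →L[ℝ] EuclideanSpace ℝ (Fin d) :=
  fderiv ℝ (gradient F) x

open Set

theorem image_one_le_of_second_deriv_le_add_mul {g g' g'' : ℝ → ℝ} {K : ℝ}
    (hg : ∀ t, HasDerivAt g (g' t) t) (hg' : ∀ t, HasDerivAt g' (g'' t) t)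
    (hK : ∀ t ∈ Ico (0 : ℝ) 1, g'' t ≤ g'' 0 + K * t) :
    g 1 ≤ g 0 + g' 0 + g'' 0 / 2 + K / 6 := by
  have hB' (t : ℝ) : HasDerivAt (fun s => g' 0 + g'' 0 * s + K * s ^ 2 / 2) (g'' 0 + K * t) t := by
    refine ((((hasDerivAt_id' t).const_mul (g'' 0)).const_add (g' 0)).add
      (((hasDerivAt_pow 2 t).const_mul K).div_const 2)).congr_deriv ?_
    ring
  have hB (t : ℝ) : HasDerivAt (fun s => g 0 + g' 0 * s + g'' 0 * s ^ 2 / 2 + K * s ^ 3 / 6)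
      (g' 0 + g'' 0 * t + K * t ^ 2 / 2) t := by
    refine (((((hasDerivAt_id' t).const_mul (g' 0)).const_add (g 0)).add
      (((hasDerivAt_pow 2 t).const_mul (g'' 0)).div_const 2)).add
      (((hasDerivAt_pow 3 t).const_mul K).div_const 6)).congr_deriv ?_
    ring
  have hderiv : ∀ t ∈ Icc (0 : ℝ) 1, g' t ≤ g' 0 + g'' 0 * t + K * t ^ 2 / 2 :=
    image_le_of_deriv_right_le_deriv_boundary
      (fun t _ => (hg' t).continuousAt.continuousWithinAt) (fun t _ => (hg' t).hasDerivWithinAt)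
      (by simp) (fun t _ => (hB' t).continuousAt.continuousWithinAt)
      (fun t _ => (hB' t).hasDerivWithinAt) hK
  have := image_le_of_deriv_right_le_deriv_boundary
      (fun t _ => (hg t).continuousAt.continuousWithinAt) (fun t _ => (hg t).hasDerivWithinAt)
      (by simp) (fun t _ => (hB t).continuousAt.continuousWithinAt)
      (fun t _ => (hB t).hasDerivWithinAt) (fun t ht => hderiv t (Ico_subset_Icc_self ht))
      (right_mem_Icc.2 zero_le_one)
  simpa using this

theorem hasDerivAt_add_smul {E : Type*} [NormedAddCommGroup E] [NormedSpace ℝ E] (x p : E) (t : ℝ) :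
    HasDerivAt (fun s : ℝ => x + s • p) p t := by
  simpa using ((hasDerivAt_id t).smul_const p).const_add x

section

variable {E : Type*} [NormedAddCommGroup E] [InnerProductSpace ℝ E]

theorem inner_apply_self_le_of_norm_sub_le {A B : E →L[ℝ] E} {c : ℝ} (h : ‖A - B‖ ≤ c) (v : E) :
    ⟪A v, v⟫ ≤ ⟪B v, v⟫ + c * ‖v‖ ^ 2 := by
  have : ⟪(A - B) v, v⟫ ≤ c * ‖v‖ ^ 2 :=
    calc ⟪(A - B) v, v⟫ ≤ ‖(A - B) v‖ * ‖v‖ := real_inner_le_norm _ _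
      _ ≤ ‖A - B‖ * ‖v‖ * ‖v‖ := by gcongr; exact (A - B).le_opNorm v
      _ ≤ c * ‖v‖ ^ 2 := by rw [mul_assoc, ← sq]; gcongr
  rwa [sub_apply, inner_sub_left, sub_le_iff_le_add'] at this

theorem mul_norm_le_norm_apply_of_le_inner {f : E → E} {μ : ℝ}
    (hf : ∀ v, μ * ‖v‖ ^ 2 ≤ ⟪f v, v⟫) (v : E) : μ * ‖v‖ ≤ ‖f v‖ := by
  rcases (norm_nonneg v).eq_or_lt with hv | hv
  · rw [← hv, mul_zero]; exact norm_nonneg _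
  · refine le_of_mul_le_mul_right ?_ hv
    calc μ * ‖v‖ * ‖v‖ = μ * ‖v‖ ^ 2 := by ring
      _ ≤ ⟪f v, v⟫ := hf v
      _ ≤ ‖f v‖ * ‖v‖ := real_inner_le_norm _ _

variable [CompleteSpace E] {F : E → ℝ}

theorem ContDiff.differentiable_gradient (hF : ContDiff ℝ 2 F) : Differentiable ℝ (gradient F) :=
  (InnerProductSpace.toDual ℝ E).symm.differentiable.comp
    ((hF.fderiv_right (m := 1) le_rfl).differentiable one_ne_zero)

theorem ContDiff.hasDerivAt_comp_add_smul (hF : ContDiff ℝ 2 F) (x p : E) (t : ℝ) :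
    HasDerivAt (fun s : ℝ => F (x + s • p)) ⟪gradient F (x + t • p), p⟫ t := by
  rw [inner_gradient_left]
  exact (hF.differentiable two_ne_zero _).hasFDerivAt.comp_hasDerivAt t (hasDerivAt_add_smul x p t)

theorem ContDiff.hasDerivAt_inner_gradient_comp_add_smul (hF : ContDiff ℝ 2 F) (x p : E) (t : ℝ) :
    HasDerivAt (fun s : ℝ => ⟪gradient F (x + s • p), p⟫)
      ⟪fderiv ℝ (gradient F) (x + t • p) p, p⟫ t := by
  have := ((hF.differentiable_gradient _).hasFDerivAt.comp_hasDerivAt t (hasDerivAt_add_smul x p t)).inner ℝ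
    (hasDerivAt_const t p)
  simpa using this

theorem ContDiff.apply_add_le_of_lipschitz_fderiv_gradient (hF : ContDiff ℝ 2 F) {L : ℝ}
    (hLip : ∀ a b, ‖fderiv ℝ (gradient F) a - fderiv ℝ (gradient F) b‖ ≤ L * ‖a - b‖)
    (x p : E) :
    F (x + p) ≤ F x + ⟪gradient F x, p⟫ + ⟪fderiv ℝ (gradient F) x p, p⟫ / 2 + L * ‖p‖ ^ 3 / 6 := by
  have key := image_one_le_of_second_deriv_le_add_mul (K := L * ‖p‖ ^ 3)
    (hF.hasDerivAt_comp_add_smul x p) (hF.hasDerivAt_inner_gradient_comp_add_smul x p) ?_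
  · simpa using key
  intro t ht
  have hdist : ‖x + t • p - x‖ = t * ‖p‖ := by simp [norm_smul, abs_of_nonneg ht.1]
  have := inner_apply_self_le_of_norm_sub_le ((hLip (x + t • p) x).trans_eq (by rw [hdist])) p
  simp only [zero_smul, add_zero]
  linarith

end

theorem stmt_16_general {d : ℕ} (F : EuclideanSpace ℝ (Fin d) → ℝ)
    (γ L ε β : ℝ) (x p : EuclideanSpace ℝ (Fin d))
    (H : EuclideanSpace ℝ (Fin d) →L[ℝ] EuclideanSpace ℝ (Fin d))
    -- `F` is twice continuously differentiable with `L`-Lipschitz Hessian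
    (hFC : ContDiff ℝ 2 F)
    (hLip : ∀ a b, ‖hess F a - hess F b‖ ≤ L * ‖a - b‖)
    (hγ : 0 < γ) (hε1 : ε < 1)
    (hβhalf : β < 1 / 2)
    (hcond : 1 - 2 * ε - 2 * (1 - ε) * β > 0)
    -- `H` is symmetric with `(1-ε)γ I ⪯ H` and `‖H - ∇²F(x)‖ ≤ εγ`
    (hHlow : ∀ v, (1 - ε) * γ * ‖v‖ ^ 2 ≤ ⟪H v, v⟫)
    (hnear : ‖H - hess F x‖ ≤ ε * γ)
    -- `p = -H⁻¹ ∇F(x)`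
    (hp : H p = -(gradient F x))
    -- gradient smallness condition
    (hgrad : ‖gradient F x‖ ≤ 3 * (1 - ε) * γ ^ 2 * (1 - 2 * ε - 2 * (1 - ε) * β) / L) :
    -- the unit step size satisfies the Armijo condition
    F (x + p) ≤ F x + β * ⟪p, gradient F x⟫ := by
  rcases eq_or_ne p 0 with rfl | hp0
  · simp
  set g := gradient F x
  set n := ‖p‖
  set c := 1 - 2 * ε - 2 * (1 - ε) * β
  have hμ : 0 < (1 - ε) * γ := mul_pos (sub_pos.2 hε1) hγ
  have hL : 0 ≤ L :=
    nonneg_of_mul_nonneg_left ((norm_nonneg _).trans ((hLip (x + p) x).trans_eq (by simp)))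
      (norm_pos_iff.2 hp0)
  have htaylor : F (x + p) ≤ F x + ⟪g, p⟫ + ⟪hess F x p, p⟫ / 2 + L * n ^ 3 / 6 :=
    hFC.apply_add_le_of_lipschitz_fderiv_gradient hLip x p
  have hmodel : ⟪hess F x p, p⟫ ≤ ⟪H p, p⟫ + ε * γ * n ^ 2 :=
    inner_apply_self_le_of_norm_sub_le (by rwa [norm_sub_rev]) p
  have hdescent : ⟪g, p⟫ = -⟪H p, p⟫ := by rw [hp, inner_neg_left, neg_neg]
  have hstep : (1 - ε) * γ * n ≤ ‖g‖ := by
    simpa [hp] using mul_norm_le_norm_apply_of_le_inner hHlow p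
  have hLn : L * n ≤ 3 * γ * c := by
    have hLg : L * ‖g‖ ≤ 3 * (1 - ε) * γ ^ 2 * c := by
      rw [mul_comm]; exact mul_le_of_le_div₀
        (mul_nonneg (mul_nonneg (by linarith) (sq_nonneg γ)) hcond.le) hL hgrad
    refine le_of_mul_le_mul_left ?_ hμ
    calc (1 - ε) * γ * (L * n) = L * ((1 - ε) * γ * n) := by ring
      _ ≤ L * ‖g‖ := mul_le_mul_of_nonneg_left hstep hL
      _ ≤ 3 * (1 - ε) * γ ^ 2 * c := hLg
      _ = (1 - ε) * γ * (3 * γ * c) := by ring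
  rw [real_inner_comm]
  have hcurv := mul_le_mul_of_nonneg_left (hHlow p) (sub_nonneg.2 hβhalf.le)
  have hcubic := mul_le_mul_of_nonneg_right hLn (sq_nonneg n)
  -- the coefficients cancel because `(1/2 - β)(1 - ε) = ε/2 + c/2`
  linear_combination htaylor + hmodel / 2 + hcurv + hcubic / 6 + (1 - β) * hdescent

theorem stmt_16 {d : ℕ} (F : EuclideanSpace ℝ (Fin d) → ℝ)
    (γ L ε β : ℝ) (x p : EuclideanSpace ℝ (Fin d))
    (H : EuclideanSpace ℝ (Fin d) →L[ℝ] EuclideanSpace ℝ (Fin d))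
    -- `F` is twice continuously differentiable with `L`-Lipschitz Hessian
    (hFC : ContDiff ℝ 2 F)
    (hLip : ∀ a b, ‖hess F a - hess F b‖ ≤ L * ‖a - b‖)
    (hγ : 0 < γ) (hε : 0 < ε) (hε1 : ε < 1)
    (hβ : 0 < β) (hβhalf : β < 1 / 2)
    (hcond : 1 - 2 * ε - 2 * (1 - ε) * β > 0)
    -- `H` is symmetric with `(1-ε)γ I ⪯ H` and `‖H - ∇²F(x)‖ ≤ εγ`
    (hHsym : ∀ u v, ⟪H u, v⟫ = ⟪u, H v⟫)
    (hHlow : ∀ v, (1 - ε) * γ * ‖v‖ ^ 2 ≤ ⟪H v, v⟫)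
    (hnear : ‖H - hess F x‖ ≤ ε * γ)
    -- `p = -H⁻¹ ∇F(x)`
    (hp : H p = -(gradient F x))
    -- gradient smallness condition
    (hgrad : ‖gradient F x‖ ≤ 3 * (1 - ε) * γ ^ 2 * (1 - 2 * ε - 2 * (1 - ε) * β) / L) :
    -- the unit step size satisfies the Armijo condition
    F (x + p) ≤ F x + β * ⟪p, gradient F x⟫ :=
  stmt_16_general F γ L ε β x p H hFC hLip hγ hε1 hβhalf hcond hHlow hnear hp hgrad
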